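/- arXiv:math/0205174 — 3 statements merged into one kernel-verified Lean document; each statement's English description precedes it below -/
import Mathlib

section
/- Let S = K[x_1,...,x_r] be the polynomial ring over a field K, graded with deg(x_i) = d_i where d_1 ≥ d_2 ≥ ... ≥ d_r are positive integers. Let M be a nonzero finitely generated graded S-module of finite length (Krull dimension 0), and let a(M) be the maximal degree d with M_d ≠ 0. Then for every i ≥ 0, deg(Tor_i^S(M,K)) ≤ d_1 + d_2 + ... + d_i + a(M). -/
/-!
`Tor_i^S(M, K)` can be computed from the minimal free resolution `F_•` of `M`, where it is
`F_i ⊗ K`, or from the Koszul resolution of `K`, where it is a subquotient of `M ⊗ ⋀ⁱ S^r`,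
whose degree-`e` part is built from the pieces `M_{e - (d_{l₁} + ⋯ + d_{lᵢ})}`. If a generator of
`F_i` had degree `e > d₁ + ⋯ + d_i + a(M)`, all these pieces vanish, and a staircase chase
through the double complex `F_• ⊗ K_•` — using that the Koszul complex of `S` is exact in
positive degrees — writes the generator as an element of `im δ_i + 𝔪 F_i`, contradicting
minimality.
-/

open MvPolynomial Finset

namespace MvPolynomial

variable {R σ : Type*} [CommRing R]

lemma mem_ideal_span_X_image_of_X_mul_mem {s : Set σ} {n : σ} (hn : n ∉ s)
    {f : MvPolynomial σ R} (h : X n * f ∈ Ideal.span (X '' s)) : f ∈ Ideal.span (X '' s) := by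
  rw [mem_ideal_span_X_image] at h ⊢
  intro m hm
  obtain ⟨i, hi, hmi⟩ := h (Finsupp.single n 1 + m) (by simpa [support_X_mul] using hm)
  refine ⟨i, hi, ?_⟩
  rwa [Finsupp.add_apply, Finsupp.single_eq_of_ne (by rintro rfl; exact hn hi), zero_add] at hmi

lemma mem_ideal_span_X_of_constantCoeff_eq_zero {f : MvPolynomial σ R}
    (hf : constantCoeff f = 0) : f ∈ Ideal.span (Set.range X) := by
  rw [← Set.image_univ, mem_ideal_span_X_image]
  intro m hm
  have hm0 : m ≠ 0 := by rintro rfl; simp_all [mem_support_iff, constantCoeff_eq]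
  obtain ⟨i, hi⟩ := Finsupp.ne_iff.mp hm0
  exact ⟨i, Set.mem_univ i, hi⟩

lemma exists_sum_X_mul_eq_of_mem_ideal_span {s : Finset σ} {f : MvPolynomial σ R}
    (hf : f ∈ Ideal.span (X '' ↑s)) : ∃ t : σ → MvPolynomial σ R, ∑ l ∈ s, X l * t l = f := by
  obtain ⟨t, ht⟩ := (Submodule.mem_span_image_finset_iff_exists_fun' _).mp hf
  exact ⟨t, by simpa [mul_comm] using ht⟩

attribute [local instance] weightedGradedAlgebra in
theorem weightedHomogeneousComponent_mul_of_isWeightedHomogeneous (w : σ → ℤ) {m : ℤ}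
    {g : MvPolynomial σ R} (hg : IsWeightedHomogeneous w g m) (n : ℤ) (f : MvPolynomial σ R) :
    weightedHomogeneousComponent w n (f * g) = weightedHomogeneousComponent w (n - m) f * g := by
  have := DirectSum.coe_decompose_mul_add_of_right_mem (weightedHomogeneousSubmodule R w)
    (a := f) (i := n - m) ((mem_weightedHomogeneousSubmodule ..).mpr hg)
  rw [sub_add_cancel] at this
  rw [← weightedDecomposition.decompose'_apply, ← weightedDecomposition.decompose'_apply]
  exact this

end MvPolynomial

lemma Finsupp.weight_natCast {σ : Type*} (d : σ → ℕ) (m : σ →₀ ℕ) :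
    Finsupp.weight (fun l => (d l : ℤ)) m = (Finsupp.weight d m : ℤ) := by
  simp [Finsupp.weight_apply, Finsupp.sum]

lemma LinearMap.pi_apply_eq_sum_smul_single {ι A N : Type*} [Fintype ι] [DecidableEq ι]
    [CommRing A] [AddCommGroup N] [Module A N] (φ : (ι → A) →ₗ[A] N) (v : ι → A) :
    φ v = ∑ j, v j • φ (Pi.single j 1) := by
  conv_lhs => rw [← univ_sum_single v]
  simp [← Pi.single_smul', ← map_smul]

lemma LinearMap.constantCoeff_apply_eq_zero {R σ ι ι' : Type*} [CommRing R] [Fintype ι]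
    [DecidableEq ι] {φ : (ι → MvPolynomial σ R) →ₗ[MvPolynomial σ R] (ι' → MvPolynomial σ R)}
    (hφ : ∀ j j', constantCoeff (φ (Pi.single j 1) j') = 0) (v : ι → MvPolynomial σ R) (j' : ι') :
    constantCoeff (φ v j') = 0 := by
  simp [φ.pi_apply_eq_sum_smul_single v, Finset.sum_apply, hφ]

section GradedFree

variable {R σ ι ι' : Type*} [CommRing R] (w : σ → ℤ)

/-- `v` is homogeneous of degree `e` in the graded free module `⊕ j, S(-tw j)`. -/
def IsTwistedHomogeneous (tw : ι → ℤ) (e : ℤ) (v : ι → MvPolynomial σ R) : Prop :=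
  ∀ j, IsWeightedHomogeneous w (v j) (e - tw j)

noncomputable def twistedComponent (tw : ι → ℤ) (e : ℤ) :
    (ι → MvPolynomial σ R) →ₗ[R] (ι → MvPolynomial σ R) :=
  LinearMap.pi fun j => weightedHomogeneousComponent w (e - tw j) ∘ₗ LinearMap.proj j

/-- The matrix entries of `φ : ⊕ j, S(-tw j) → ⊕ j', S(-tw' j')` have the degrees that make `φ`
degree-preserving. -/
def IsGradedMap [DecidableEq ι] (tw : ι → ℤ) (tw' : ι' → ℤ)
    (φ : (ι → MvPolynomial σ R) →ₗ[MvPolynomial σ R] (ι' → MvPolynomial σ R)) : Prop :=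
  ∀ j j', IsWeightedHomogeneous w (φ (Pi.single j 1) j') (tw j - tw' j')

variable {w} {tw : ι → ℤ} {e : ℤ}

lemma twistedComponent_apply (v : ι → MvPolynomial σ R) (j : ι) :
    twistedComponent w tw e v j = weightedHomogeneousComponent w (e - tw j) (v j) := rfl

lemma isTwistedHomogeneous_twistedComponent (v : ι → MvPolynomial σ R) :
    IsTwistedHomogeneous w tw e (twistedComponent w tw e v) :=
  fun _ => weightedHomogeneousComponent_isWeightedHomogeneous _ _

lemma IsTwistedHomogeneous.twistedComponent_eq {v : ι → MvPolynomial σ R}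
    (hv : IsTwistedHomogeneous w tw e v) : twistedComponent w tw e v = v :=
  funext fun j => (hv j).weightedHomogeneousComponent_same

lemma IsTwistedHomogeneous.sub {v v' : ι → MvPolynomial σ R} (hv : IsTwistedHomogeneous w tw e v)
    (hv' : IsTwistedHomogeneous w tw e v') : IsTwistedHomogeneous w tw e (v - v') :=
  fun j => (hv j).sub (hv' j)

lemma isTwistedHomogeneous_single_one [DecidableEq ι] (j : ι) :
    IsTwistedHomogeneous w tw (tw j) (Pi.single j (1 : MvPolynomial σ R)) := by
  intro j'
  by_cases h : j' = j
  · subst h; simpa using isWeightedHomogeneous_one R w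
  · simpa [h] using isWeightedHomogeneous_zero R w _

variable [Fintype ι] [DecidableEq ι] {tw' : ι' → ℤ}
  {φ : (ι → MvPolynomial σ R) →ₗ[MvPolynomial σ R] (ι' → MvPolynomial σ R)}

lemma IsGradedMap.twistedComponent_map (hφ : IsGradedMap w tw tw' φ) (v : ι → MvPolynomial σ R) :
    twistedComponent w tw' e (φ v) = φ (twistedComponent w tw e v) := by
  funext j'
  rw [twistedComponent_apply, φ.pi_apply_eq_sum_smul_single, φ.pi_apply_eq_sum_smul_single]
  simp only [Finset.sum_apply, Pi.smul_apply, smul_eq_mul, map_sum, twistedComponent_apply,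
    weightedHomogeneousComponent_mul_of_isWeightedHomogeneous w (hφ _ j'),
    sub_sub_sub_cancel_right]

lemma IsGradedMap.isTwistedHomogeneous_map (hφ : IsGradedMap w tw tw' φ)
    {v : ι → MvPolynomial σ R} (hv : IsTwistedHomogeneous w tw e v) :
    IsTwistedHomogeneous w tw' e (φ v) := by
  rw [← hv.twistedComponent_eq, ← hφ.twistedComponent_map]
  exact isTwistedHomogeneous_twistedComponent _

lemma mem_of_isTwistedHomogeneous {M : Type*} [AddCommGroup M] [Module (MvPolynomial σ R) M]
    [Module R M] {d : σ → ℕ} {ℳ : ℤ → Submodule R M}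
    (hℳ : ∀ (e : ℕ) (x : MvPolynomial σ R), x ∈ weightedHomogeneousSubmodule R d e →
      ∀ (dd : ℤ), ∀ m ∈ ℳ dd, x • m ∈ ℳ (dd + e))
    {ε : (ι → MvPolynomial σ R) →ₗ[MvPolynomial σ R] M} (hε : ∀ j, ε (Pi.single j 1) ∈ ℳ (tw j))
    {x : ι → MvPolynomial σ R} (hx : IsTwistedHomogeneous (fun l => (d l : ℤ)) tw e x) :
    ε x ∈ ℳ e := by
  rw [ε.pi_apply_eq_sum_smul_single]
  refine Submodule.sum_mem _ fun j _ => ?_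
  by_cases h0 : x j = 0
  · simp [h0]
  obtain ⟨m, hm⟩ := ne_zero_iff.mp h0
  have hdeg := hx j hm
  rw [Finsupp.weight_natCast] at hdeg
  have hmem : x j ∈ weightedHomogeneousSubmodule R d (Finsupp.weight d m) := fun {m'} hm' => by
    have := hx j hm'
    rw [Finsupp.weight_natCast] at this
    exact_mod_cast this.trans hdeg.symm
  convert hℳ _ _ hmem _ _ (hε j) using 2
  omega

end GradedFree

namespace Koszul

noncomputable section

section Chains

variable {σ N : Type*} [AddCommGroup N] {q : ℕ} {A : Finset σ}

/-- A Koszul chain is a family indexed by the sets `U` of variables, `c U` being the coefficient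
of the wedge of the variables in `U`; it lies in degree `q` when only `#U = q` contributes. -/
def InDegree (q : ℕ) (c : Finset σ → N) : Prop := ∀ U, c U ≠ 0 → #U = q

def SupportedIn (A : Finset σ) (c : Finset σ → N) : Prop := ∀ U, c U ≠ 0 → U ⊆ A

lemma InDegree.eq_zero_of_card_ne {c : Finset σ → N} (hc : InDegree q c) {U : Finset σ}
    (hU : #U ≠ q) : c U = 0 := by
  by_contra h; exact hU (hc U h)

lemma InDegree.add {c c' : Finset σ → N} (hc : InDegree q c) (hc' : InDegree q c') :
    InDegree q (c + c') := by
  intro U hU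
  by_cases h : c U = 0
  · exact hc' U (by simpa [h] using hU)
  · exact hc U h

lemma InDegree.sub {c c' : Finset σ → N} (hc : InDegree q c) (hc' : InDegree q c') :
    InDegree q (c - c') := by
  intro U hU
  by_cases h : c U = 0
  · exact hc' U (by simpa [h] using hU)
  · exact hc U h

lemma SupportedIn.add {c c' : Finset σ → N} (hc : SupportedIn A c) (hc' : SupportedIn A c') :
    SupportedIn A (c + c') := by
  intro U hU
  by_cases h : c U = 0
  · exact hc' U (by simpa [h] using hU)
  · exact hc U h

lemma SupportedIn.mono {B : Finset σ} {c : Finset σ → N} (hc : SupportedIn A c) (hAB : A ⊆ B) :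
    SupportedIn B c :=
  fun U hU => (hc U hU).trans hAB

variable [DecidableEq σ] {n : σ} {s : Finset σ}

def contract (n : σ) (c : Finset σ → N) : Finset σ → N :=
  fun V => if n ∈ V then 0 else c (insert n V)

/-- Exterior multiplication by the variable `n`, without the Koszul sign. -/
def wedge (n : σ) (b : Finset σ → N) : Finset σ → N :=
  fun U => if n ∈ U then b (U.erase n) else 0

lemma InDegree.contract {c : Finset σ → N} (hc : InDegree (q + 1) c) :
    InDegree q (contract n c) := by
  intro V hV
  by_cases hn : n ∈ V
  · simp [Koszul.contract, hn] at hV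
  · have := hc _ (by simpa [Koszul.contract, hn] using hV)
    rwa [card_insert_of_notMem hn, Nat.add_right_cancel_iff] at this

lemma SupportedIn.contract {c : Finset σ → N} (hc : SupportedIn (insert n s) c) :
    SupportedIn s (contract n c) := by
  intro V hV
  by_cases hn : n ∈ V
  · simp [Koszul.contract, hn] at hV
  · have := hc _ (by simpa [Koszul.contract, hn] using hV)
    rwa [insert_subset_insert_iff hn] at this

lemma InDegree.wedge {b : Finset σ → N} (hb : InDegree q b) : InDegree (q + 1) (wedge n b) := by
  intro U hU
  by_cases hn : n ∈ U
  · rw [← hb _ (by simpa [Koszul.wedge, hn] using hU), card_erase_add_one hn]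
  · simp [Koszul.wedge, hn] at hU

lemma SupportedIn.wedge {b : Finset σ → N} (hb : SupportedIn s b) :
    SupportedIn (insert n s) (wedge n b) := by
  intro U hU
  by_cases hn : n ∈ U
  · rw [← insert_erase hn]
    exact insert_subset_insert n (hb _ (by simpa [Koszul.wedge, hn] using hU))
  · simp [Koszul.wedge, hn] at hU

variable [Fintype σ]

def ofSingletons (t : σ → N) : Finset σ → N := fun U => ∑ l, if U = {l} then t l else 0

lemma ofSingletons_singleton (t : σ → N) (l : σ) : ofSingletons t {l} = t l := by
  simp [ofSingletons, singleton_inj]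

lemma inDegree_ofSingletons (t : σ → N) : InDegree 1 (ofSingletons t) := by
  intro U hU
  obtain ⟨l, -, hl⟩ := exists_ne_zero_of_sum_ne_zero hU
  rw [show U = {l} by by_contra h; simp [h] at hl, card_singleton]

lemma supportedIn_ofSingletons {t : σ → N} (ht : ∀ l ∉ A, t l = 0) :
    SupportedIn A (ofSingletons t) := by
  intro U hU
  obtain ⟨l, -, hl⟩ := exists_ne_zero_of_sum_ne_zero hU
  by_cases hUl : U = {l}
  · subst hUl
    by_contra hlA
    simp [ht l (by simpa using hlA)] at hl
  · simp [hUl] at hl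

end Chains

section Differential

variable {R σ : Type*} [CommRing R] [LinearOrder σ]

def sign (l : σ) (U : Finset σ) : ℤ := (-1) ^ #{u ∈ U | u < l}

lemma sign_insert_of_not_lt {l n : σ} (h : ¬n < l) (U : Finset σ) :
    sign l (insert n U) = sign l U := by
  rw [sign, sign, filter_insert, if_neg h]

lemma sign_insert_of_lt {l n : σ} (h : n < l) {U : Finset σ} (hn : n ∉ U) :
    sign l (insert n U) = -sign l U := by
  rw [sign, sign, filter_insert, if_pos h, card_insert_of_notMem (by simp [hn]), pow_succ,
    mul_neg_one]

lemma sign_mul_sign_insert {l m : σ} (hlm : l ≠ m) {U : Finset σ} (hl : l ∉ U) (hm : m ∉ U) :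
    sign l U * sign m (insert l U) = -(sign m U * sign l (insert m U)) := by
  rcases hlm.lt_or_gt with h | h
  · rw [sign_insert_of_lt h hl, sign_insert_of_not_lt h.not_gt]; ring
  · rw [sign_insert_of_lt h hm, sign_insert_of_not_lt h.not_gt]; ring

variable [Fintype σ] {N : Type*} [AddCommGroup N] [Module (MvPolynomial σ R) N] {q : ℕ}

variable (R) in
def diff : (Finset σ → N) →ₗ[MvPolynomial σ R] (Finset σ → N) where
  toFun c U := ∑ l ∈ Uᶜ, sign l U • (X l : MvPolynomial σ R) • c (insert l U)
  map_add' c c' := by ext U; simp [smul_add, sum_add_distrib]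
  map_smul' s c := by ext U; simp [smul_sum, smul_comm s]

lemma diff_apply (c : Finset σ → N) (U : Finset σ) :
    diff R c U = ∑ l ∈ Uᶜ, sign l U • (X l : MvPolynomial σ R) • c (insert l U) := rfl

lemma diff_apply_empty (c : Finset σ → N) :
    diff R c ∅ = ∑ l, (X l : MvPolynomial σ R) • c {l} := by
  simp [diff_apply, sign]

lemma diff_comp {N' : Type*} [AddCommGroup N'] [Module (MvPolynomial σ R) N']
    (φ : N →ₗ[MvPolynomial σ R] N') (c : Finset σ → N) :
    diff R (fun U => φ (c U)) = fun U => φ (diff R c U) := by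
  ext U
  simp [diff_apply, map_sum, map_zsmul]

/-- The terms of `∂ (∂ c) U` indexed by `(l, m)` and `(m, l)` cancel. -/
theorem diff_diff (c : Finset σ → N) : diff R (diff R c) = 0 := by
  ext U
  simp only [diff_apply, smul_sum, compl_insert, Pi.zero_apply]
  rw [sum_sigma' Uᶜ fun l => Uᶜ.erase l]
  refine sum_involution (fun p _ => ⟨p.2, p.1⟩) ?_ ?_ ?_ ?_
  · rintro ⟨l, m⟩ hp
    simp only [mem_sigma, mem_erase, mem_compl] at hp
    obtain ⟨hl, hml, hm⟩ := hp
    have hsign := congrArg (Int.cast : ℤ → MvPolynomial σ R) (sign_mul_sign_insert hml.symm hl hm)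
    push_cast at hsign
    dsimp only
    simp only [← Int.cast_smul_eq_zsmul (MvPolynomial σ R), smul_smul, insert_comm m l, ← add_smul]
    convert zero_smul (MvPolynomial σ R) _
    linear_combination (X l * X m : MvPolynomial σ R) * hsign
  · rintro ⟨l, m⟩ hp _ h
    simp only [mem_sigma, mem_erase] at hp
    exact hp.2.1 (congrArg Sigma.fst h)
  · rintro ⟨l, m⟩ hp
    simp only [mem_sigma, mem_erase] at hp ⊢
    exact ⟨hp.2.2, hp.2.1.symm, hp.1⟩
  · rintro ⟨l, m⟩ _
    rfl

lemma InDegree.diff {c : Finset σ → N} (hc : InDegree (q + 1) c) : InDegree q (diff R c) := by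
  intro U hU
  obtain ⟨l, hl, hne⟩ := exists_ne_zero_of_sum_ne_zero hU
  have := hc _ fun h => hne (by rw [h, smul_zero, smul_zero])
  rwa [card_insert_of_notMem (by simpa using hl), Nat.add_right_cancel_iff] at this

lemma diff_ofSingletons (t : σ → N) :
    diff R (ofSingletons t) = Pi.single ∅ (∑ l, (X l : MvPolynomial σ R) • t l) := by
  ext U
  by_cases hU : U = ∅
  · subst hU; simp [diff_apply_empty, ofSingletons_singleton]
  · rw [Pi.single_eq_of_ne hU, (inDegree_ofSingletons t).diff.eq_zero_of_card_ne (by simpa)]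

lemma constantCoeff_diff_apply {ι : Type*} (c : Finset σ → ι → MvPolynomial σ R)
    (U : Finset σ) (j : ι) : constantCoeff (diff R c U j) = 0 := by
  simp [diff_apply, Finset.sum_apply]

variable {n : σ} {s : Finset σ}

lemma diff_contract (hs : ∀ x ∈ s, x < n) {c : Finset σ → N} (hc : SupportedIn (insert n s) c) :
    diff R (contract n c) = contract n (diff R c) := by
  ext V
  by_cases hV : n ∈ V
  · simp [diff_apply, contract, hV]
  · simp only [contract, hV, if_false, diff_apply, compl_insert]
    rw [← sum_erase (a := n) _ (by simp)]
    refine sum_congr rfl fun l hl => ?_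
    obtain ⟨hln, hlV⟩ : l ≠ n ∧ l ∉ V := by simpa using hl
    rw [if_neg (by simp [hln.symm, hV]), insert_comm]
    by_cases h0 : c (insert l (insert n V)) = 0
    · simp [h0]
    · have hls : l ∈ s := by simpa [hln] using hc _ h0 (mem_insert_self l _)
      rw [sign_insert_of_not_lt (hs l hls).not_gt]

lemma diff_wedge_of_mem (hs : ∀ x ∈ s, x < n) {b : Finset σ → N} (hb : SupportedIn s b)
    {U : Finset σ} (hU : n ∈ U) : diff R (wedge n b) U = diff R b (U.erase n) := by
  have hbn : b (insert n (U.erase n)) = 0 := by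
    by_contra h
    exact (hs n (hb _ h (mem_insert_self n _))).false
  rw [diff_apply, diff_apply, compl_erase, sum_insert (by simp [hU]), hbn, smul_zero,
    smul_zero, zero_add]
  refine sum_congr rfl fun l hl => ?_
  have hln : l ≠ n := by rintro rfl; simp [hU] at hl
  rw [wedge, if_pos (mem_insert_of_mem hU), erase_insert_of_ne hln]
  by_cases h0 : b (insert l (U.erase n)) = 0
  · simp [h0]
  · have hsign := sign_insert_of_not_lt (hs l (hb _ h0 (mem_insert_self l _))).not_gt (U.erase n)
    rw [insert_erase hU] at hsign
    rw [hsign]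

lemma diff_wedge_of_notMem (b : Finset σ → N) {U : Finset σ} (hU : n ∉ U) :
    diff R (wedge n b) U = sign n U • (X n : MvPolynomial σ R) • b U := by
  rw [diff_apply, sum_eq_single n]
  · rw [wedge, if_pos (mem_insert_self n U), erase_insert hU]
  · intro l _ hln
    rw [wedge, if_neg (by simp [hln.symm, hU]), smul_zero, smul_zero]
  · simp [hU]

end Differential

section Acyclic

variable {R σ ι : Type*} [CommRing R] [LinearOrder σ] [Fintype σ] {n : σ} {s : Finset σ}

lemma exists_diff_eq_single_empty {A : Finset σ} {v : ι → MvPolynomial σ R}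
    (hv : ∀ j, v j ∈ Ideal.span (X '' ↑A)) :
    ∃ b : Finset σ → ι → MvPolynomial σ R,
      InDegree 1 b ∧ SupportedIn A b ∧ diff R b = Pi.single ∅ v := by
  choose t ht using fun j => exists_sum_X_mul_eq_of_mem_ideal_span (hv j)
  refine ⟨ofSingletons fun l j => if l ∈ A then t j l else 0, inDegree_ofSingletons _,
    supportedIn_ofSingletons fun l hl => funext fun j => by simp [hl], ?_⟩
  rw [diff_ofSingletons]
  congr 1
  ext j
  simp [← ht j, Finset.sum_apply, mul_ite, sum_ite_mem]

lemma mem_ideal_span_of_diff_apply_empty_eq_zero (hs : ∀ x ∈ s, x < n)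
    {c : Finset σ → ι → MvPolynomial σ R} (hc : SupportedIn (insert n s) c)
    (h : diff R c ∅ = 0) (j : ι) : c {n} j ∈ Ideal.span (X '' ↑s) := by
  have hn : n ∉ s := fun h => (hs n h).false
  apply mem_ideal_span_X_image_of_X_mul_mem hn
  have hsum : ∑ l ∈ insert n s, X l * c {l} j = 0 := by
    rw [diff_apply_empty] at h
    have := congrFun h j
    simp only [Finset.sum_apply, Pi.smul_apply, smul_eq_mul, Pi.zero_apply] at this
    rwa [← sum_subset (subset_univ _) fun l _ hl => ?_] at this
    rw [show c {l} = 0 by by_contra h0; exact hl (singleton_subset_iff.mp (hc _ h0)),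
      Pi.zero_apply, mul_zero]
  rw [sum_insert hn, add_eq_zero_iff_eq_neg] at hsum
  rw [hsum]
  exact neg_mem (sum_mem fun l hl => Ideal.mul_mem_right _ _ (Ideal.subset_span ⟨l, hl, rfl⟩))

variable (R ι) in
def Acyclic (A : Finset σ) : Prop :=
  ∀ q ≥ 1, ∀ c : Finset σ → ι → MvPolynomial σ R, InDegree q c → SupportedIn A c →
    diff R c = 0 → ∃ b, InDegree (q + 1) b ∧ SupportedIn A b ∧ diff R b = c

lemma acyclic_empty : Acyclic R ι (∅ : Finset σ) := by
  intro q hq c hc hcs _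
  refine ⟨0, fun U h => absurd rfl h, fun U h => absurd rfl h, ?_⟩
  rw [map_zero]
  ext1 U
  by_contra h
  have := hc U (Ne.symm h)
  rw [subset_empty.mp (hcs U (Ne.symm h)), card_empty] at this
  omega

lemma exists_diff_eq_contract (hs : ∀ x ∈ s, x < n) (ih : Acyclic R ι s) {q : ℕ} (hq : 1 ≤ q)
    {c : Finset σ → ι → MvPolynomial σ R} (hc : InDegree q c) (hcs : SupportedIn (insert n s) c)
    (hcyc : diff R c = 0) : ∃ b, InDegree q b ∧ SupportedIn s b ∧ diff R b = contract n c := by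
  obtain ⟨p, rfl⟩ : ∃ p, q = p + 1 := ⟨q - 1, by omega⟩
  rcases Nat.eq_zero_or_pos p with rfl | hp
  · -- `contract n c` is concentrated at `∅`, where `X n • c {n}` lies in `(X l : l ∈ s)`
    -- and `X n` is a nonzerodivisor modulo these variables.
    obtain ⟨b, hb, hbs, hdb⟩ := exists_diff_eq_single_empty
      (mem_ideal_span_of_diff_apply_empty_eq_zero hs hcs (congrFun hcyc ∅))
    refine ⟨b, hb, hbs, hdb.trans ?_⟩
    ext1 V
    by_cases hV : V = ∅
    · simp [hV, contract]
    · rw [Pi.single_eq_of_ne hV, hc.contract.eq_zero_of_card_ne (by simpa)]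
  · refine ih p hp _ hc.contract hcs.contract ?_
    rw [diff_contract hs hcs, hcyc]
    ext1 V
    simp [contract]

/-- Subtracting `∂ (wedge n b₁)`, where `∂ b₁ = contract n c`, removes the variable `n`
from `c`. -/
lemma acyclic_insert (hs : ∀ x ∈ s, x < n) (ih : Acyclic R ι s) : Acyclic R ι (insert n s) := by
  intro q hq c hc hcs hcyc
  obtain ⟨b₁, hb₁, hb₁s, hdb₁⟩ := exists_diff_eq_contract hs ih hq hc hcs hcyc
  have hsupp : SupportedIn s (c - diff R (wedge n b₁)) := by
    intro U hU
    by_cases hnU : n ∈ U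
    · simp [diff_wedge_of_mem hs hb₁s hnU, hdb₁, contract, insert_erase hnU] at hU
    · rw [Pi.sub_apply, diff_wedge_of_notMem b₁ hnU] at hU
      by_cases h0 : c U = 0
      · exact hb₁s U fun h => hU (by simp [h0, h])
      · simpa [hnU] using subset_insert_iff.mp (hcs U h0)
  obtain ⟨b₀, hb₀, hb₀s, hdb₀⟩ := ih q hq _ (hc.sub hb₁.wedge.diff) hsupp
    (by rw [map_sub, hcyc, diff_diff, sub_zero])
  refine ⟨wedge n b₁ + b₀, hb₁.wedge.add hb₀, hb₁s.wedge.add (hb₀s.mono (subset_insert n s)), ?_⟩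
  rw [map_add, hdb₀, add_sub_cancel]

theorem acyclic (A : Finset σ) : Acyclic R ι A :=
  A.induction_on_max acyclic_empty fun _ _ hs ih => acyclic_insert hs ih

end Acyclic

section Graded

variable {R σ : Type*} [CommRing R] {w : σ → ℤ} {ι ι' : Type*}

variable (w) in
/-- The wedge of the variables in `U` has degree `∑ l ∈ U, w l`. -/
def IsHomogeneous (tw : ι → ℤ) (e : ℤ) (c : Finset σ → ι → MvPolynomial σ R) : Prop :=
  ∀ U, IsTwistedHomogeneous w tw (e - ∑ l ∈ U, w l) (c U)

variable (w) in
def component (tw : ι → ℤ) (e : ℤ) :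
    (Finset σ → ι → MvPolynomial σ R) →ₗ[R] (Finset σ → ι → MvPolynomial σ R) :=
  LinearMap.pi fun U => twistedComponent w tw (e - ∑ l ∈ U, w l) ∘ₗ LinearMap.proj U

variable {tw : ι → ℤ} {e : ℤ} {q : ℕ}

lemma component_apply (c : Finset σ → ι → MvPolynomial σ R) (U : Finset σ) :
    component w tw e c U = twistedComponent w tw (e - ∑ l ∈ U, w l) (c U) := rfl

lemma isHomogeneous_component (c : Finset σ → ι → MvPolynomial σ R) :
    IsHomogeneous w tw e (component w tw e c) :=
  fun _ => isTwistedHomogeneous_twistedComponent _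

lemma IsHomogeneous.component_eq {c : Finset σ → ι → MvPolynomial σ R}
    (hc : IsHomogeneous w tw e c) : component w tw e c = c :=
  funext fun U => (hc U).twistedComponent_eq

lemma IsHomogeneous.sub {c c' : Finset σ → ι → MvPolynomial σ R} (hc : IsHomogeneous w tw e c)
    (hc' : IsHomogeneous w tw e c') : IsHomogeneous w tw e (c - c') :=
  fun U => (hc U).sub (hc' U)

lemma InDegree.component {c : Finset σ → ι → MvPolynomial σ R} (hc : InDegree q c) :
    InDegree q (component w tw e c) :=
  fun U hU => hc U fun h => hU (by rw [component_apply, h, map_zero])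

section GradedMap

variable [Fintype ι] [DecidableEq ι] {tw' : ι' → ℤ}
  {φ : (ι → MvPolynomial σ R) →ₗ[MvPolynomial σ R] (ι' → MvPolynomial σ R)}

lemma _root_.IsGradedMap.isHomogeneous_comp (hφ : IsGradedMap w tw tw' φ)
    {c : Finset σ → ι → MvPolynomial σ R} (hc : IsHomogeneous w tw e c) :
    IsHomogeneous w tw' e (fun U => φ (c U)) :=
  fun U => hφ.isTwistedHomogeneous_map (hc U)

lemma _root_.IsGradedMap.component_comp (hφ : IsGradedMap w tw tw' φ)
    (c : Finset σ → ι → MvPolynomial σ R) :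
    component w tw' e (fun U => φ (c U)) = fun U => φ (component w tw e c U) :=
  funext fun _ => hφ.twistedComponent_map _

/-- Lift arbitrarily, then take the degree-`e` component. -/
theorem _root_.IsGradedMap.exists_isHomogeneous_comp_eq (hφ : IsGradedMap w tw tw' φ)
    {c : Finset σ → ι' → MvPolynomial σ R} (hc : InDegree q c) (hch : IsHomogeneous w tw' e c)
    (hrange : ∀ U, c U ∈ LinearMap.range φ) :
    ∃ u, InDegree q u ∧ IsHomogeneous w tw e u ∧ (fun U => φ (u U)) = c := by
  choose u hu using hrange
  let u' : Finset σ → ι → MvPolynomial σ R := fun U => if #U = q then u U else 0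
  have hu' : (fun U => φ (u' U)) = c := by
    funext U
    by_cases hU : #U = q
    · simp [u', hU, hu]
    · simp [u', hU, hc.eq_zero_of_card_ne hU]
  refine ⟨component w tw e u', InDegree.component fun U h => ?_, isHomogeneous_component _, ?_⟩
  · by_contra hU; exact h (by simp [u', hU])
  · rw [← hφ.component_comp, hu', hch.component_eq]

end GradedMap

lemma isHomogeneous_single_empty [DecidableEq σ] {v : ι → MvPolynomial σ R}
    (hv : IsTwistedHomogeneous w tw e v) :
    IsHomogeneous w tw e (Pi.single ∅ v) := by
  intro U j
  by_cases hU : U = ∅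
  · subst hU; simpa using hv j
  · simpa [hU] using isWeightedHomogeneous_zero R w _

variable [LinearOrder σ] [Fintype σ]

lemma component_diff (c : Finset σ → ι → MvPolynomial σ R) :
    component w tw e (diff R c) = diff R (component w tw e c) := by
  ext1 U; funext j
  simp only [component_apply, twistedComponent_apply, diff_apply, Finset.sum_apply,
    Pi.smul_apply, smul_eq_mul, map_sum, map_zsmul]
  refine sum_congr rfl fun l hl => ?_
  rw [mul_comm, weightedHomogeneousComponent_mul_of_isWeightedHomogeneous w
    (isWeightedHomogeneous_X R w l), mul_comm, sum_insert (by simpa using hl)]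
  ring_nf

lemma IsHomogeneous.diff {c : Finset σ → ι → MvPolynomial σ R} (hc : IsHomogeneous w tw e c) :
    IsHomogeneous w tw e (diff R c) := by
  rw [← hc.component_eq, ← component_diff]
  exact isHomogeneous_component _

theorem exists_isHomogeneous_diff_eq (hq : 1 ≤ q) {c : Finset σ → ι → MvPolynomial σ R}
    (hc : InDegree q c) (hch : IsHomogeneous w tw e c) (hcyc : diff R c = 0) :
    ∃ b, InDegree (q + 1) b ∧ IsHomogeneous w tw e b ∧ diff R b = c := by
  obtain ⟨b, hb, -, hdb⟩ := acyclic univ q hq c hc (fun U _ => subset_univ U) hcyc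
  exact ⟨component w tw e b, hb.component, isHomogeneous_component _,
    by rw [← component_diff, hdb, hch.component_eq]⟩

theorem exists_isHomogeneous_diff_eq_single_empty {v : ι → MvPolynomial σ R}
    (hv : IsTwistedHomogeneous w tw e v) (h0 : ∀ j, constantCoeff (v j) = 0) :
    ∃ b, InDegree 1 b ∧ IsHomogeneous w tw e b ∧ diff R b = Pi.single ∅ v := by
  obtain ⟨b, hb, -, hdb⟩ := exists_diff_eq_single_empty (A := univ)
    fun j => by simpa using mem_ideal_span_X_of_constantCoeff_eq_zero (h0 j)
  exact ⟨component w tw e b, hb.component, isHomogeneous_component _,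
    by rw [← component_diff, hdb, (isHomogeneous_single_empty hv).component_eq]⟩

end Graded

end

end Koszul

section Resolution

open Koszul

variable {R σ : Type*} [CommRing R] [LinearOrder σ] [Fintype σ] {w : σ → ℤ}
  {M : Type*} [AddCommGroup M] [Module (MvPolynomial σ R) M]
  {b : ℕ → ℕ} {a : ∀ i, Fin (b i) → ℤ}
  {δ : ∀ i, (Fin (b (i + 1)) → MvPolynomial σ R) →ₗ[MvPolynomial σ R]
    (Fin (b i) → MvPolynomial σ R)}
  {ε : (Fin (b 0) → MvPolynomial σ R) →ₗ[MvPolynomial σ R] M}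

/-- The staircase chase through the double complex `F_• ⊗ K_•`; on reaching `F_0` the chain
lives in the degrees `e - ∑ l ∈ U, w l` with `#U = p + q`, which `ε` kills. -/
theorem exists_eq_comp_add_diff (hexact₀ : Function.Exact (δ 0) ε)
    (hexact : ∀ i, Function.Exact (δ (i + 1)) (δ i))
    (hδ : ∀ i, IsGradedMap w (a (i + 1)) (a i) (δ i)) {e : ℤ} (p : ℕ) {q : ℕ} (hq : 1 ≤ q)
    (hvanish : ∀ U : Finset σ, #U = p + q → ∀ x,
      IsTwistedHomogeneous w (a 0) (e - ∑ l ∈ U, w l) x → ε x = 0)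
    {y : Finset σ → Fin (b p) → MvPolynomial σ R} (hy : InDegree q y)
    (hyh : IsHomogeneous w (a p) e y)
    (hdy : ∀ U, diff R y U ∈ LinearMap.range (δ p)) :
    ∃ z v, InDegree q z ∧ IsHomogeneous w (a (p + 1)) e z ∧
      InDegree (q + 1) v ∧ IsHomogeneous w (a p) e v ∧ y = (fun U => δ p (z U)) + diff R v := by
  induction p generalizing q with
  | zero =>
    obtain ⟨z, hz, hzh, hδz⟩ := (hδ 0).exists_isHomogeneous_comp_eq hy hyh fun U => by
      by_cases h0 : y U = 0
      · rw [h0]; exact zero_mem _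
      · exact (hexact₀ _).mp (hvanish U (by simpa using hy U h0) _ (hyh U))
    exact ⟨z, 0, hz, hzh, fun U h => absurd rfl h, fun U j => by simp [isWeightedHomogeneous_zero],
      by rw [hδz, map_zero, add_zero]⟩
  | succ p ih =>
    have hcyc : diff R (fun U => δ p (y U)) = 0 := by
      rw [diff_comp]
      funext U
      obtain ⟨u, hu⟩ := hdy U
      rw [← hu, (hexact p).apply_apply_eq_zero]; rfl
    obtain ⟨c, hc, hch, hdc⟩ := exists_isHomogeneous_diff_eq hq
      (fun U hU => hy U fun h => hU (by rw [h, map_zero])) ((hδ p).isHomogeneous_comp hyh) hcyc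
    obtain ⟨z', v', hz', hz'h, -, -, hcz'v'⟩ := ih (q := q + 1) (by omega)
      (fun U hU => hvanish U (by omega)) hc hch (fun U => by rw [hdc]; exact ⟨y U, rfl⟩)
    have hker : ∀ U, δ p ((y - diff R z') U) = 0 := by
      intro U
      have := congrArg (diff R) hcz'v'
      rw [hdc, map_add, diff_diff, add_zero, diff_comp] at this
      rw [Pi.sub_apply, map_sub, congrFun this U, sub_self]
    obtain ⟨z, hz, hzh, hδz⟩ := (hδ (p + 1)).exists_isHomogeneous_comp_eq (hy.sub hz'.diff)
      (hyh.sub hz'h.diff) fun U => (hexact p _).mp (hker U)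
    exact ⟨z, z', hz, hzh, hz', hz'h, by rw [hδz, sub_add_cancel]⟩

/-- A generator of `F_{i+1}` of degree `e` would survive in `Tor_{i+1}(M, R) = H_{i+1}(M ⊗ K_•)`,
which vanishes in degree `e` when `M` does in the degrees `e - ∑ l ∈ U, w l`, `#U = i + 1`. -/
theorem twist_ne_of_vanishing [Nontrivial R] (hexact₀ : Function.Exact (δ 0) ε)
    (hexact : ∀ i, Function.Exact (δ (i + 1)) (δ i))
    (hδ : ∀ i, IsGradedMap w (a (i + 1)) (a i) (δ i))
    (hmin : ∀ i j j', constantCoeff (δ i (Pi.single j 1) j') = 0) {i : ℕ} {e : ℤ}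
    (hvanish : ∀ U : Finset σ, #U = i + 1 → ∀ x,
      IsTwistedHomogeneous w (a 0) (e - ∑ l ∈ U, w l) x → ε x = 0)
    (j : Fin (b (i + 1))) : a (i + 1) j ≠ e := by
  rintro rfl
  obtain ⟨y, hy, hyh, hdy⟩ := exists_isHomogeneous_diff_eq_single_empty
    ((hδ i).isTwistedHomogeneous_map (isTwistedHomogeneous_single_one j)) (hmin i j)
  obtain ⟨z, v, -, -, -, -, hyzv⟩ := exists_eq_comp_add_diff hexact₀ hexact hδ i le_rfl hvanish
    hy hyh fun U => by
      by_cases hU : U = ∅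
      · simp [hdy, hU]
      · simp [hdy, hU, zero_mem]
  have hδz : δ i (Pi.single j 1 - diff R z ∅) = 0 := by
    have := congrFun (congrArg (diff R) hyzv) ∅
    rw [hdy, map_add, diff_diff, add_zero, diff_comp, Pi.single_eq_same] at this
    rw [map_sub, this, sub_self]
  obtain ⟨u, hu⟩ := (hexact i _).mp hδz
  have := congrArg (fun v => constantCoeff (v j)) hu
  simp [LinearMap.constantCoeff_apply_eq_zero (hmin (i + 1)), constantCoeff_diff_apply] at this

end Resolution

lemma sum_le_sum_range_card {r : ℕ} {d : Fin r → ℕ} (hd : Antitone d) (U : Finset (Fin r)) :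
    ∑ l ∈ U, (d l : ℤ) ≤ ∑ k ∈ range #U, if h : k < r then (d ⟨k, h⟩ : ℤ) else 0 := by
  refine Finset.induction_on_max U (by simp) fun n s hs ih => ?_
  have hn : n ∉ s := fun h => (hs n h).false
  have hsn : #s ≤ n := by
    simpa using card_le_card (fun x hx => mem_Iio.mpr (hs x hx) : s ⊆ Iio n)
  have hdn : (d n : ℤ) ≤ d ⟨#s, hsn.trans_lt n.isLt⟩ := by exact_mod_cast hd (Fin.le_def.mpr hsn)
  rw [sum_insert hn, card_insert_of_notMem hn, sum_range_succ, dif_pos (hsn.trans_lt n.isLt)]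
  linarith

theorem tor_degree_bound_finite_length_general
    {K : Type} [Field K] {r : ℕ} (d : Fin r → ℕ)
    (hmono : Antitone d)
    {M : Type} [AddCommGroup M] [Module (MvPolynomial (Fin r) K) M]
    [Module K M]
    (ℳ : ℤ → Submodule K M)
    (hcompat : ∀ (e : ℕ) (x : MvPolynomial (Fin r) K),
      x ∈ MvPolynomial.weightedHomogeneousSubmodule K d e →
        ∀ (dd : ℤ), ∀ m ∈ ℳ dd, x • m ∈ ℳ (dd + e))
    (aM : ℤ) (haM : IsGreatest {dd : ℤ | ℳ dd ≠ ⊥} aM)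
    -- the minimal free graded resolution `⋯ → F₁ → F₀ → M → 0`
    (b : ℕ → ℕ) (a : ∀ i : ℕ, Fin (b i) → ℤ)
    (δ : ∀ i : ℕ, (Fin (b (i + 1)) → MvPolynomial (Fin r) K)
      →ₗ[MvPolynomial (Fin r) K] (Fin (b i) → MvPolynomial (Fin r) K))
    (ε : (Fin (b 0) → MvPolynomial (Fin r) K) →ₗ[MvPolynomial (Fin r) K] M)
    (hexact0 : Function.Exact (δ 0) ε)
    (hexact : ∀ i : ℕ, Function.Exact (δ (i + 1)) (δ i))
    (hgradedδ : ∀ (i : ℕ) (j : Fin (b (i + 1))) (j' : Fin (b i)) (mo : Fin r →₀ ℕ),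
      MvPolynomial.coeff mo ((δ i (Pi.single j 1)) j') ≠ 0 →
        ((mo.sum fun l k => d l * k : ℕ) : ℤ) + a i j' = a (i + 1) j)
    (hgradedε : ∀ j : Fin (b 0), ε (Pi.single j 1) ∈ ℳ (a 0 j))
    (hminδ : ∀ (i : ℕ) (j : Fin (b (i + 1))) (j' : Fin (b i)),
      MvPolynomial.constantCoeff ((δ i (Pi.single j 1)) j') = 0)
    (hminε : ∀ v : Fin (b 0) → MvPolynomial (Fin r) K,
      ε v = 0 → ∀ j, MvPolynomial.constantCoeff (v j) = 0) :
    ∀ (i : ℕ) (j : Fin (b i)),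
      a i j ≤ (∑ l ∈ Finset.range i, if h : l < r then (d ⟨l, h⟩ : ℤ) else 0) + aM := by
  have hδ : ∀ i, IsGradedMap (fun l => (d l : ℤ)) (a (i + 1)) (a i) (δ i) := by
    intro i j j' mo hmo
    have := hgradedδ i j j' mo hmo
    rw [Finsupp.weight_natCast, Finsupp.weight_apply]
    simp only [smul_eq_mul, mul_comm] at this ⊢
    omega
  intro i j
  cases i with
  | zero =>
    have hne : ε (Pi.single j 1) ≠ 0 := fun h => by simpa using hminε _ h j
    simpa using haM.2 (show ℳ (a 0 j) ≠ ⊥ from fun h => hne (by simpa [h] using hgradedε j))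
  | succ i =>
    by_contra! hlt
    refine twist_ne_of_vanishing hexact0 hexact hδ hminδ (fun U hU x hx => ?_) j rfl
    have hbot : ℳ (a (i + 1) j - ∑ l ∈ U, (d l : ℤ)) = ⊥ := by
      by_contra h
      have := sum_le_sum_range_card hmono U
      rw [hU] at this
      linarith [haM.2 h]
    simpa [hbot] using mem_of_isTwistedHomogeneous hcompat hgradedε hx

/-- **Degree bound for `Tor_i^S(M,K)`, finite length case.**
`S = K[x₁,…,x_r]` is graded with `deg x_i = d_i`, `d₁ ≥ ⋯ ≥ d_r > 0`.  `M` is a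
nonzero finitely generated graded `S`-module of finite length (Noetherian and Artinian,
i.e. Krull dimension `0`), with grading `ℳ`, and `a(M)` is the maximal degree `dd` with
`ℳ dd ≠ 0`.  The graded vector space `Tor_i^S(M,K)` is `F_i ⊗_S K` for the minimal free
graded resolution `⋯ → F₁ → F₀ → M → 0`, encoded below by twists `a i j`
(`F_i = ⊕_{j < b i} S(-a i j)`), exact degree-preserving differentials and minimality.
Then `deg Tor_i^S(M,K) ≤ d₁ + ⋯ + d_i + a(M)`: every twist of `F_i` is bounded by
`d₁ + ⋯ + d_i + a(M)`. -/
theorem tor_degree_bound_finite_length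
    {K : Type} [Field K] {r : ℕ} (d : Fin r → ℕ)
    (hdpos : ∀ i, 0 < d i) (hmono : Antitone d)
    {M : Type} [AddCommGroup M] [Module (MvPolynomial (Fin r) K) M]
    [Module K M] [IsScalarTower K (MvPolynomial (Fin r) K) M]
    [Module.Finite (MvPolynomial (Fin r) K) M] [Nontrivial M]
    [IsNoetherian (MvPolynomial (Fin r) K) M] [IsArtinian (MvPolynomial (Fin r) K) M]
    (ℳ : ℤ → Submodule K M)
    (hdecomp : DirectSum.IsInternal ℳ)
    (hcompat : ∀ (e : ℕ) (x : MvPolynomial (Fin r) K),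
      x ∈ MvPolynomial.weightedHomogeneousSubmodule K d e →
        ∀ (dd : ℤ), ∀ m ∈ ℳ dd, x • m ∈ ℳ (dd + e))
    (aM : ℤ) (haM : IsGreatest {dd : ℤ | ℳ dd ≠ ⊥} aM)
    -- the minimal free graded resolution `⋯ → F₁ → F₀ → M → 0`
    (b : ℕ → ℕ) (a : ∀ i : ℕ, Fin (b i) → ℤ)
    (δ : ∀ i : ℕ, (Fin (b (i + 1)) → MvPolynomial (Fin r) K)
      →ₗ[MvPolynomial (Fin r) K] (Fin (b i) → MvPolynomial (Fin r) K))
    (ε : (Fin (b 0) → MvPolynomial (Fin r) K) →ₗ[MvPolynomial (Fin r) K] M)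
    (hsurj : Function.Surjective ε)
    (hexact0 : Function.Exact (δ 0) ε)
    (hexact : ∀ i : ℕ, Function.Exact (δ (i + 1)) (δ i))
    (hgradedδ : ∀ (i : ℕ) (j : Fin (b (i + 1))) (j' : Fin (b i)) (mo : Fin r →₀ ℕ),
      MvPolynomial.coeff mo ((δ i (Pi.single j 1)) j') ≠ 0 →
        ((mo.sum fun l k => d l * k : ℕ) : ℤ) + a i j' = a (i + 1) j)
    (hgradedε : ∀ j : Fin (b 0), ε (Pi.single j 1) ∈ ℳ (a 0 j))
    (hminδ : ∀ (i : ℕ) (j : Fin (b (i + 1))) (j' : Fin (b i)),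
      MvPolynomial.constantCoeff ((δ i (Pi.single j 1)) j') = 0)
    (hminε : ∀ v : Fin (b 0) → MvPolynomial (Fin r) K,
      ε v = 0 → ∀ j, MvPolynomial.constantCoeff (v j) = 0) :
    ∀ (i : ℕ) (j : Fin (b i)),
      a i j ≤ (∑ l ∈ Finset.range i, if h : l < r then (d ⟨l, h⟩ : ℤ) else 0) + aM :=
  tor_degree_bound_finite_length_general d hmono ℳ hcompat aM haM b a δ ε hexact0 hexact hgradedδ
    hgradedε hminδ hminε
end

section
/- Let K be a field, n ≥ 1, m ≥ 1, let 𝓜 be the set of monomials of degree m in K[y_1,...,y_n], and let φ: K[{x_M}_{M∈𝓜}] → K[y_1,...,y_n] be the K-algebra homomorphism sending x_M to M. Then the kernel J of φ is generated by the binomials x_{y_i M} x_{y_j N} − x_{y_j M} x_{y_i N}, where M and N range over monomials of degree m−1 and 1 ≤ i, j ≤ n; in particular, J is generated by elements that are quadratic in the variables {x_M}. -/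
/-!
The kernel of a monomial map `x_a ↦ y^{f a}` is spanned by the binomials `x^a - x^b` whose
exponents have the same image: subtracting from `p` its image under a section of the exponent
map leaves a combination of such binomials. Membership of `x^a - x^b` in an ideal is a
congruence on exponents, so for the Veronese it suffices to connect two multisets `a`, `b` of
degree-`m` monomials with the same product by quadratic exchanges
`(y_i M, y_j N) ↦ (y_j M, y_i N)`. Given a factor `v` of `a`, such an exchange inside `b`
brings a factor `w` of `b` strictly closer to `v` without changing the product,
so eventually `v` divides `b` as well; cancelling `v` and inducting on the degree concludes.
-/

namespace MvPolynomial

open Finsupp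

variable {σ τ R : Type*} [CommRing R]

def binomialCon (I : Ideal (MvPolynomial σ R)) : AddCon (σ →₀ ℕ) where
  r a b := monomial a (1 : R) - monomial b 1 ∈ I
  iseqv :=
    { refl := fun a => by simp
      symm := fun h => by rw [← neg_sub]; exact I.neg_mem h
      trans := fun h₁ h₂ => by simpa using I.add_mem h₁ h₂ }
  add' {a b c d} h₁ h₂ := by
    have key : monomial (a + c) (1 : R) - monomial (b + d) 1
        = monomial c 1 * (monomial a 1 - monomial b 1)
          + monomial b 1 * (monomial c 1 - monomial d 1) := by
      simp only [mul_sub, monomial_mul, mul_one, add_comm c]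
      abel
    rw [key]
    exact I.add_mem (I.mul_mem_left _ h₁) (I.mul_mem_left _ h₂)

theorem binomialCon_iff {I : Ideal (MvPolynomial σ R)} {a b : σ →₀ ℕ} :
    binomialCon I a b ↔ monomial a (1 : R) - monomial b 1 ∈ I := Iff.rfl

theorem aeval_monomial_monomial (f : σ → τ →₀ ℕ) (a : σ →₀ ℕ) (c : R) :
    aeval (R := R) (fun s => monomial (f s) (1 : R)) (monomial a c)
      = monomial (linearCombination ℕ f a) c := by
  rw [aeval_monomial, linearCombination_apply, monomial_finsupp_sum_index]
  simp [monomial_pow, algebraMap_eq]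

theorem mapDomain_monomial (g : (τ →₀ ℕ) → σ →₀ ℕ) (d : τ →₀ ℕ) (c : R) :
    AddMonoidAlgebra.mapDomain g (monomial d c) = (monomial (g d) c : MvPolynomial σ R) :=
  AddMonoidAlgebra.mapDomain_single

theorem ker_aeval_monomial_le {f : σ → τ →₀ ℕ} {I : Ideal (MvPolynomial σ R)}
    (h : ∀ a b, linearCombination ℕ f a = linearCombination ℕ f b → binomialCon I a b) :
    RingHom.ker (aeval (R := R) fun s => monomial (f s) (1 : R)) ≤ I := by
  set φ := aeval (R := R) fun s => monomial (f s) (1 : R)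
  -- `mapDomain rep ∘ φ` replaces every monomial by a fixed representative of its fibre
  set rep := Function.invFun (linearCombination ℕ f)
  have sub_mem : ∀ p, p - AddMonoidAlgebra.mapDomain rep (φ p) ∈ I := by
    intro p
    induction p using induction_on' with
    | monomial a c =>
      have hrep :
          linearCombination ℕ f a = linearCombination ℕ f (rep (linearCombination ℕ f a)) :=
        (Function.invFun_eq ⟨a, rfl⟩).symm
      have : monomial a c - AddMonoidAlgebra.mapDomain rep (φ (monomial a c))
          = C c * (monomial a 1 - monomial (rep (linearCombination ℕ f a)) 1) := by
        rw [aeval_monomial_monomial, mapDomain_monomial, mul_sub, C_mul_monomial,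
          C_mul_monomial, mul_one]
      rw [this]
      exact I.mul_mem_left _ (h _ _ hrep)
    | add p q hp hq =>
      simpa [AddMonoidAlgebra.mapDomain_add, add_sub_add_comm] using I.add_mem hp hq
  intro p hp
  simpa [RingHom.mem_ker.mp hp] using sub_mem p

end MvPolynomial

namespace Finsupp

variable {α ι : Type*}

theorem exists_eq_single_add_of_mem_support {b : α →₀ ℕ} {x : α} (h : x ∈ b.support) :
    ∃ c, b = single x 1 + c :=
  le_iff_exists_add.mp (single_le_iff.mpr (Nat.one_le_iff_ne_zero.mpr (mem_support_iff.mp h)))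

theorem eq_of_le_of_degree_eq {v w : ι →₀ ℕ} (hle : v ≤ w) (hd : w.degree = v.degree) :
    v = w := by
  obtain ⟨c, rfl⟩ := le_iff_exists_add.mp hle
  have hc : c.degree = 0 := by rw [map_add] at hd; omega
  rw [(degree_eq_zero_iff c).mp hc, add_zero]

theorem exists_mem_support_apply_ne_zero {f : α → ι →₀ ℕ} {c : α →₀ ℕ} {i : ι}
    (h : linearCombination ℕ f c i ≠ 0) : ∃ u ∈ c.support, f u i ≠ 0 := by
  contrapose! h
  rw [linearCombination_apply, Finsupp.sum, Finset.sum_apply']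
  exact Finset.sum_eq_zero fun u hu => by simp [h u hu]

theorem degree_tsub_add_single_lt {v t : ι →₀ ℕ} {i j : ι} (hi : t i < v i)
    (hj : v j ≤ t j) :
    (v - (t + single i 1)).degree < (v - (t + single j 1)).degree := by
  classical
  have key : v - (t + single i 1) + single i 1 = v - (t + single j 1) := by
    ext k
    simp only [coe_add, coe_tsub, Pi.add_apply, Pi.sub_apply, single_apply]
    split_ifs <;> subst_vars <;> omega
  rw [← key, map_add, degree_single]
  exact Nat.lt_succ_self _

end Finsupp

noncomputable section

namespace Veronese

open Finsupp MvPolynomial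

variable {R ι : Type*} [CommRing R] {m : ℕ}

abbrev Exponent (ι : Type*) (m : ℕ) := {s : ι →₀ ℕ // (s.sum fun _ k => k) = m}

theorem Exponent.degree_eq (v : Exponent ι m) : v.1.degree = m := v.2

def Exponent.addSingle (s : ι →₀ ℕ) (i : ι) (hs : s.degree + 1 = m) : Exponent ι m :=
  ⟨s + single i 1, show (s + single i 1).degree = m by rw [map_add, degree_single, hs]⟩

theorem Exponent.exists_eq_addSingle (u : Exponent ι m) {i : ι} (hi : u.1 i ≠ 0) :
    ∃ s hs, u = addSingle s i hs := by
  obtain ⟨s, hs⟩ := exists_eq_single_add_of_mem_support (mem_support_iff.mpr hi)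
  have hdeg : s.degree + 1 = m := by
    rw [← u.degree_eq, hs, map_add, degree_single, add_comm]
  exact ⟨s, hdeg, Subtype.ext (hs.trans (add_comm _ _))⟩

variable (R ι m) in
def quadrics : Ideal (MvPolynomial (Exponent ι m) R) :=
  Ideal.span {q | ∃ (s t : ι →₀ ℕ) (i j : ι)
    (_ : (s.sum fun _ k => k) = m - 1) (_ : (t.sum fun _ k => k) = m - 1)
    (h1 : ((s + single i 1).sum fun _ k => k) = m)
    (h2 : ((t + single j 1).sum fun _ k => k) = m)
    (h3 : ((s + single j 1).sum fun _ k => k) = m)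
    (h4 : ((t + single i 1).sum fun _ k => k) = m),
    q = MvPolynomial.X ⟨s + single i 1, h1⟩ * MvPolynomial.X ⟨t + single j 1, h2⟩
      - MvPolynomial.X ⟨s + single j 1, h3⟩ * MvPolynomial.X ⟨t + single i 1, h4⟩}

theorem Exponent.exists_lt_of_ne {v w : Exponent ι m} (h : v ≠ w) : ∃ i, w.1 i < v.1 i := by
  by_contra! hle
  exact h (Subtype.ext (eq_of_le_of_degree_eq hle (by rw [v.degree_eq, w.degree_eq])))

open Exponent

theorem quadrics_exchange {s t : ι →₀ ℕ} (i j : ι) (hs : s.degree + 1 = m)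
    (ht : t.degree + 1 = m) :
    binomialCon (quadrics R ι m)
      (single (addSingle s i hs) 1 + single (addSingle t j ht) 1)
      (single (addSingle s j hs) 1 + single (addSingle t i ht) 1) := by
  have hmem : X (addSingle s i hs) * X (addSingle t j ht)
      - X (addSingle s j hs) * X (addSingle t i ht) ∈ quadrics R ι m := Ideal.subset_span
    ⟨s, t, i, j, (by omega : s.degree = m - 1), (by omega : t.degree = m - 1),
      (addSingle s i hs).2, (addSingle t j ht).2, (addSingle s j hs).2, (addSingle t i ht).2, rfl⟩
  rw [binomialCon_iff]
  rwa [X, X, X, X, monomial_mul, monomial_mul, mul_one] at hmem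

theorem quadrics_le_ker :
    quadrics R ι m ≤
      RingHom.ker (aeval (R := R) fun v : Exponent ι m => monomial v.1 (1 : R)) := by
  rw [quadrics, Ideal.span_le]
  rintro q ⟨s, t, i, j, -, -, h1, h2, h3, h4, rfl⟩
  rw [SetLike.mem_coe, RingHom.mem_ker, map_sub, sub_eq_zero]
  simp only [map_mul, aeval_X, monomial_mul, mul_one]
  congr 1
  ac_rfl

theorem degree_linearCombination_val (a : Exponent ι m →₀ ℕ) :
    (linearCombination ℕ Subtype.val a).degree = m * a.degree := by
  induction a using Finsupp.induction_linear with
  | zero => simp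
  | add a b ha hb => rw [map_add, map_add, ha, hb, map_add, mul_add]
  | single v k =>
    rw [linearCombination_single, map_nsmul, v.degree_eq, degree_single, smul_eq_mul, mul_comm]

theorem eq_zero_of_linearCombination_val_eq_zero (hm : m ≠ 0) {a : Exponent ι m →₀ ℕ}
    (h : linearCombination ℕ Subtype.val a = 0) : a = 0 := by
  have := degree_linearCombination_val a
  rw [h, map_zero, eq_comm, mul_eq_zero] at this
  exact (degree_eq_zero_iff a).mp (this.resolve_left hm)

theorem exists_binomialCon_closer {b : Exponent ι m →₀ ℕ} {v w : Exponent ι m}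
    (hw : w ∈ b.support) (hv : v.1 ≤ linearCombination ℕ Subtype.val b) (hvw : v ≠ w) :
    ∃ b' w', binomialCon (quadrics R ι m) b b' ∧
      linearCombination ℕ Subtype.val b' = linearCombination ℕ Subtype.val b ∧
      w' ∈ b'.support ∧ (v.1 - w'.1).degree < (v.1 - w.1).degree := by
  obtain ⟨i, hi⟩ := exists_lt_of_ne hvw
  obtain ⟨j, hj⟩ := exists_lt_of_ne hvw.symm
  obtain ⟨c, rfl⟩ := exists_eq_single_add_of_mem_support hw
  have hci : linearCombination ℕ Subtype.val c i ≠ 0 := by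
    have := hv i
    rw [map_add, linearCombination_single, one_smul, Finsupp.coe_add, Pi.add_apply] at this
    omega
  obtain ⟨u, hu, hui⟩ := exists_mem_support_apply_ne_zero hci
  obtain ⟨c, rfl⟩ := exists_eq_single_add_of_mem_support hu
  obtain ⟨s, hs, rfl⟩ := Exponent.exists_eq_addSingle u hui
  obtain ⟨t, ht, rfl⟩ := Exponent.exists_eq_addSingle w (i := j) (by omega)
  refine ⟨single (addSingle s j hs) 1 + single (addSingle t i ht) 1 + c, addSingle t i ht,
    ?_, ?_, ?_, ?_⟩
  · rw [add_left_comm, ← add_assoc]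
    exact AddCon.add _ (quadrics_exchange i j hs ht) (AddCon.refl _ c)
  · simp only [map_add, linearCombination_single, one_smul, addSingle]
    ac_rfl
  · simp
  · simp only [addSingle, Finsupp.coe_add, Pi.add_apply, single_eq_same] at hi hj
    exact degree_tsub_add_single_lt (lt_of_le_of_lt le_self_add hi) (by omega)

theorem exists_binomialCon_mem_support {b : Exponent ι m →₀ ℕ} {v w : Exponent ι m}
    (hw : w ∈ b.support) (hv : v.1 ≤ linearCombination ℕ Subtype.val b) :
    ∃ b', binomialCon (quadrics R ι m) b b' ∧
      linearCombination ℕ Subtype.val b' = linearCombination ℕ Subtype.val b ∧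
      v ∈ b'.support := by
  induction hd : (v.1 - w.1).degree using Nat.strong_induction_on generalizing b w with
  | _ d ih =>
  by_cases hvw : v = w
  · exact ⟨b, AddCon.refl _ b, rfl, hvw ▸ hw⟩
  obtain ⟨b₂, w₂, hb₂, hψ₂, hw₂, hlt⟩ := exists_binomialCon_closer (R := R) hw hv hvw
  obtain ⟨b', hb', hψ', hv'⟩ := ih _ (hd ▸ hlt) hw₂ (hψ₂ ▸ hv) rfl
  exact ⟨b', AddCon.trans _ hb₂ hb', hψ'.trans hψ₂, hv'⟩

theorem binomialCon_quadrics_of_linearCombination_eq (hm : m ≠ 0) {a b : Exponent ι m →₀ ℕ}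
    (h : linearCombination ℕ Subtype.val a = linearCombination ℕ Subtype.val b) :
    binomialCon (quadrics R ι m) a b := by
  induction hd : a.degree generalizing a b with
  | zero =>
    obtain rfl : a = 0 := (degree_eq_zero_iff a).mp hd
    obtain rfl : b = 0 := eq_zero_of_linearCombination_val_eq_zero hm (by rw [← h, map_zero])
    exact AddCon.refl _ 0
  | succ d ih =>
    have ha : a ≠ 0 := by rintro rfl; simp at hd
    have hb : b ≠ 0 := fun hb =>
      ha (eq_zero_of_linearCombination_val_eq_zero hm (by simp [h, hb]))
    obtain ⟨v, hv⟩ := support_nonempty_iff.mpr ha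
    obtain ⟨w, hw⟩ := support_nonempty_iff.mpr hb
    obtain ⟨a', rfl⟩ := exists_eq_single_add_of_mem_support hv
    have hvb : v.1 ≤ linearCombination ℕ Subtype.val b := by
      rw [← h, map_add, linearCombination_single, one_smul]
      exact le_self_add
    obtain ⟨b', hbb', hψ', hvb'⟩ := exists_binomialCon_mem_support (R := R) hw hvb
    obtain ⟨b', rfl⟩ := exists_eq_single_add_of_mem_support hvb'
    have hψ : linearCombination ℕ Subtype.val a' = linearCombination ℕ Subtype.val b' := by
      rw [← h, map_add, map_add] at hψ'
      exact (add_left_cancel hψ').symm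
    have hda : a'.degree = d := by rw [map_add, degree_single] at hd; omega
    exact AddCon.trans _ (AddCon.add _ (AddCon.refl _ _) (ih hψ hda)) (AddCon.symm _ hbb')

end Veronese

end

theorem veronese_syzygy_ideal_binomials_general
    {K : Type} [Field K] (n m : ℕ) (hm : 1 ≤ m)
    (φ : MvPolynomial {s : Fin n →₀ ℕ // (s.sum fun _ k => k) = m} K
      →ₐ[K] MvPolynomial (Fin n) K)
    (hφ : φ = MvPolynomial.aeval fun s : {s : Fin n →₀ ℕ // (s.sum fun _ k => k) = m} =>
      MvPolynomial.monomial s.1 (1 : K)) :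
    RingHom.ker φ =
      Ideal.span {q : MvPolynomial {s : Fin n →₀ ℕ // (s.sum fun _ k => k) = m} K |
        ∃ (s t : Fin n →₀ ℕ) (i j : Fin n)
          (_ : (s.sum fun _ k => k) = m - 1) (_ : (t.sum fun _ k => k) = m - 1)
          (h1 : ((s + Finsupp.single i 1).sum fun _ k => k) = m)
          (h2 : ((t + Finsupp.single j 1).sum fun _ k => k) = m)
          (h3 : ((s + Finsupp.single j 1).sum fun _ k => k) = m)
          (h4 : ((t + Finsupp.single i 1).sum fun _ k => k) = m),
          q = MvPolynomial.X ⟨s + Finsupp.single i 1, h1⟩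
                * MvPolynomial.X ⟨t + Finsupp.single j 1, h2⟩
              - MvPolynomial.X ⟨s + Finsupp.single j 1, h3⟩
                * MvPolynomial.X ⟨t + Finsupp.single i 1, h4⟩} := by
  subst hφ
  change _ = Veronese.quadrics K (Fin n) m
  exact le_antisymm
    (MvPolynomial.ker_aeval_monomial_le fun _ _ h =>
      Veronese.binomialCon_quadrics_of_linearCombination_eq (Nat.one_le_iff_ne_zero.mp hm) h)
    Veronese.quadrics_le_ker

/-- **Quadratic binomial relations of the Veronese.**
Let `𝓜` be the set of monomials of degree `m` in `K[y₁,…,y_n]` (identified with their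
exponent vectors) and `φ : K[{x_M}_{M ∈ 𝓜}] → K[y₁,…,y_n]` the `K`-algebra map sending
`x_M` to `M`.  Then `ker φ` is generated by the binomials
`x_{y_i M} x_{y_j N} - x_{y_j M} x_{y_i N}` with `M, N` monomials of degree `m - 1`
and `1 ≤ i, j ≤ n`; in particular it is generated in degree `2` in the variables `x_M`. -/
theorem veronese_syzygy_ideal_binomials
    {K : Type} [Field K] (n m : ℕ) (hn : 1 ≤ n) (hm : 1 ≤ m)
    (φ : MvPolynomial {s : Fin n →₀ ℕ // (s.sum fun _ k => k) = m} K
      →ₐ[K] MvPolynomial (Fin n) K)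
    (hφ : φ = MvPolynomial.aeval fun s : {s : Fin n →₀ ℕ // (s.sum fun _ k => k) = m} =>
      MvPolynomial.monomial s.1 (1 : K)) :
    RingHom.ker φ =
      Ideal.span {q : MvPolynomial {s : Fin n →₀ ℕ // (s.sum fun _ k => k) = m} K |
        ∃ (s t : Fin n →₀ ℕ) (i j : Fin n)
          (_ : (s.sum fun _ k => k) = m - 1) (_ : (t.sum fun _ k => k) = m - 1)
          (h1 : ((s + Finsupp.single i 1).sum fun _ k => k) = m)
          (h2 : ((t + Finsupp.single j 1).sum fun _ k => k) = m)
          (h3 : ((s + Finsupp.single j 1).sum fun _ k => k) = m)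
          (h4 : ((t + Finsupp.single i 1).sum fun _ k => k) = m),
          q = MvPolynomial.X ⟨s + Finsupp.single i 1, h1⟩
                * MvPolynomial.X ⟨t + Finsupp.single j 1, h2⟩
              - MvPolynomial.X ⟨s + Finsupp.single j 1, h3⟩
                * MvPolynomial.X ⟨t + Finsupp.single i 1, h4⟩} :=
  veronese_syzygy_ideal_binomials_general n m hm φ hφ
end

section
/- Let K be a field of characteristic 0, let e_1,...,e_n ∈ K[y_1,...,y_n] be the elementary symmetric polynomials, and let Δ = ∏_{1≤i<j≤n}(y_i − y_j). Then Δ² is a symmetric polynomial and hence there is a (unique) polynomial P ∈ K[x_1,...,x_n] with Δ² = P(e_1,...,e_n); the syzygy ideal J ⊆ K[x_1,...,x_{n+1}] of the generators (e_1,...,e_n,Δ) of K[y_1,...,y_n]^{A_n} (the kernel of x_i ↦ e_i for i ≤ n, x_{n+1} ↦ Δ) is generated by the single element x_{n+1}² − P(x_1,...,x_n), which is homogeneous of degree n(n−1) for the grading deg(x_i) = i (i ≤ n), deg(x_{n+1}) = n(n−1)/2. -/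
/-!
Up to sign, `Δ` is the Vandermonde determinant, so a permutation `π` multiplies it by `sign π`;
hence `Δ²` is symmetric, and `Δ² = P(e)` for a unique `P` by the fundamental theorem on
symmetric polynomials.

Identify `K[x₁,…,x_{n+1}]` with `A[X]`, `A = K[x₁,…,x_n]`, `X = x_{n+1}`. Modulo the monic
`X² - P`, every `Q` is congruent to some `a + bX` with `a, b ∈ A`. If `Q` is a syzygy then
`a(e) + b(e)Δ = 0`; a transposition fixes the `e_i` and negates `Δ`, so also `a(e) - b(e)Δ = 0`.
Since `2Δ ≠ 0` this forces `a(e) = b(e) = 0`, hence `a = b = 0` by the algebraic independence of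
the `e_i`.

Substituting `e_i` for `x_i` sends polynomials of weighted degree `d` (`deg x_i = i`) to
homogeneous ones of degree `d`, and is injective, so `P` is weighted homogeneous of degree
`deg Δ² = n(n-1)`.
-/

open MvPolynomial Finset

namespace Polynomial

variable {A B : Type*} [CommRing A] [CommRing B] [IsDomain B] [NeZero (2 : B)]
  {f : A →+* B} {δ : B} {τ : B →+* B}

lemma eq_zero_of_eval₂_eq_zero_of_natDegree_le_one (hf : Function.Injective f) (hδ : δ ≠ 0)
    (hτf : ∀ a, τ (f a) = f a) (hτδ : τ δ = -δ) {r : A[X]} (hr : r.natDegree ≤ 1)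
    (h : r.eval₂ f δ = 0) : r = 0 := by
  rw [eq_X_add_C_of_natDegree_le_one hr] at h ⊢
  set a := r.coeff 0
  set b := r.coeff 1
  have hplus : f b * δ + f a = 0 := by simpa using h
  have hminus : f b * -δ + f a = 0 := by simpa [hτf, hτδ] using congrArg τ hplus
  have hb : b = 0 := by
    have : (2 : B) * δ * f b = 0 := by linear_combination hplus - hminus
    simpa [hδ, two_ne_zero, map_eq_zero_iff f hf] using this
  have ha : a = 0 := by simpa [hb, map_eq_zero_iff f hf] using hplus
  simp [ha, hb]

lemma ker_eval₂RingHom_eq_span_X_sq_sub_C (hf : Function.Injective f) (hδ : δ ≠ 0)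
    (hτf : ∀ a, τ (f a) = f a) (hτδ : τ δ = -δ) {p : A} (hp : f p = δ ^ 2) :
    RingHom.ker (eval₂RingHom f δ) = Ideal.span {X ^ 2 - C p} := by
  have : Nontrivial A := f.domain_nontrivial
  have hmonic : (X ^ 2 - C p).Monic := monic_X_pow_sub_C p two_ne_zero
  have hdeg : (X ^ 2 - C p).natDegree = 2 := natDegree_X_pow_sub_C
  refine le_antisymm (fun q hq => ?_) ?_
  · have hrem : q %ₘ (X ^ 2 - C p) = 0 := by
      refine eq_zero_of_eval₂_eq_zero_of_natDegree_le_one hf hδ hτf hτδ ?_ ?_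
      · have := natDegree_modByMonic_lt q hmonic fun h => by simp [h] at hdeg
        omega
      · rw [modByMonic_eq_sub_mul_div, eval₂_sub, eval₂_mul]
        simp_all
    exact Ideal.mem_span_singleton.mpr ((modByMonic_eq_zero_iff_dvd hmonic).mp hrem)
  · rw [Ideal.span_le, Set.singleton_subset_iff]
    simp [hp]

end Polynomial

@[to_additive]
lemma Finset.prod_filter_fst_lt_snd {α β : Type*} [Fintype α] [LinearOrder α]
    [LocallyFiniteOrderTop α] [CommMonoid β] (f : α × α → β) :
    ∏ p ∈ univ.filter (fun p : α × α => p.1 < p.2), f p = ∏ i, ∏ j ∈ Ioi i, f (i, j) :=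
  prod_finset_product _ _ _ (by simp)

lemma Fin.card_filter_fst_lt_snd_mul_two (n : ℕ) :
    #(univ.filter (fun p : Fin n × Fin n => p.1 < p.2)) * 2 = n * (n - 1) := by
  rw [card_eq_sum_ones, sum_filter_fst_lt_snd, ← sum_range_id_mul_two,
    ← sum_range_reflect, ← Fin.sum_univ_eq_sum_range (fun k => n - 1 - k)]
  simp [Fin.card_Ioi]

namespace MvPolynomial

section Vandermonde

variable (n : ℕ) (R : Type*) [CommRing R]

noncomputable def vandermondePoly : MvPolynomial (Fin n) R :=
  ∏ p ∈ univ.filter (fun p : Fin n × Fin n => p.1 < p.2), (X p.1 - X p.2)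

variable {n R}

lemma vandermondePoly_eq_neg_one_pow_mul_det :
    vandermondePoly n R = (-1) ^ #(univ.filter (fun p : Fin n × Fin n => p.1 < p.2))
      * (Matrix.vandermonde (X : Fin n → MvPolynomial (Fin n) R)).det := by
  rw [Matrix.det_vandermonde, ← prod_filter_fst_lt_snd (fun p => X p.2 - X p.1),
    ← prod_const, ← prod_mul_distrib, vandermondePoly]
  exact prod_congr rfl fun _ _ => by ring

lemma rename_vandermondePoly (π : Equiv.Perm (Fin n)) :
    rename π (vandermondePoly n R)
      = ((Equiv.Perm.sign π : ℤ) : MvPolynomial (Fin n) R) * vandermondePoly n R := by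
  have hdet : rename π (Matrix.vandermonde (X : Fin n → MvPolynomial (Fin n) R)).det
      = ((Equiv.Perm.sign π : ℤ) : MvPolynomial (Fin n) R) * (Matrix.vandermonde X).det := by
    rw [← AlgHom.coe_toRingHom, RingHom.map_det, ← Matrix.det_permute]
    congr 1
    ext i j
    simp [Matrix.vandermonde]
  rw [vandermondePoly_eq_neg_one_pow_mul_det, map_mul, hdet]
  simp only [map_pow, map_neg, map_one]
  ring

lemma rename_swap_vandermondePoly {i j : Fin n} (hij : i ≠ j) :
    rename (Equiv.swap i j) (vandermondePoly n R) = -vandermondePoly n R := by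
  rw [rename_vandermondePoly, Equiv.Perm.sign_swap hij]
  simp

lemma isSymmetric_vandermondePoly_sq : (vandermondePoly n R ^ 2).IsSymmetric := by
  intro π
  rw [map_pow, rename_vandermondePoly, mul_pow, ← Int.cast_pow, ← Units.val_pow_eq_pow_val,
    Int.units_sq, Units.val_one, Int.cast_one, one_mul]

lemma vandermondePoly_ne_zero [IsDomain R] : vandermondePoly n R ≠ 0 :=
  prod_ne_zero_iff.mpr fun _ hp =>
    sub_ne_zero.mpr <| (X_injective (R := R)).ne (mem_filter.mp hp).2.ne

lemma isHomogeneous_vandermondePoly :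
    (vandermondePoly n R).IsHomogeneous #(univ.filter (fun p : Fin n × Fin n => p.1 < p.2)) := by
  rw [vandermondePoly]
  simpa using IsHomogeneous.prod _ _ (fun _ => 1)
    fun p _ => (isHomogeneous_X R p.1).sub (isHomogeneous_X R p.2)

end Vandermonde

section WeightedHomogeneous

variable {σ τ R : Type*} [CommSemiring R] {w : σ → ℕ} {w' : τ → ℕ}
  {g : σ → MvPolynomial τ R}

lemma IsWeightedHomogeneous.aeval {p : MvPolynomial σ R} {m : ℕ}
    (hp : p.IsWeightedHomogeneous w m) (hg : ∀ i, (g i).IsWeightedHomogeneous w' (w i)) :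
    (aeval g p).IsWeightedHomogeneous w' m := by
  induction hp using IsWeightedHomogeneous.induction_on with
  | zero => simpa using isWeightedHomogeneous_zero R w' m
  | add p q _ _ hp hq => simpa using hp.add hq
  | monomial d r hd =>
    rw [aeval_monomial, ← hd, Finsupp.weight_apply, Finsupp.sum, Finsupp.prod]
    exact (IsWeightedHomogeneous.prod _ _ _ fun i _ => (hg i).pow (d i)).C_mul _

lemma aeval_weightedHomogeneousComponent (hg : ∀ i, (g i).IsWeightedHomogeneous w' (w i))
    (m : ℕ) (p : MvPolynomial σ R) :
    aeval g (weightedHomogeneousComponent w m p)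
      = weightedHomogeneousComponent w' m (aeval g p) := by
  classical
  induction p using MvPolynomial.induction_on' with
  | monomial d r =>
    have hd := isWeightedHomogeneous_monomial w d r rfl
    rw [weightedHomogeneousComponent_of_mem hd, weightedHomogeneousComponent_of_mem (hd.aeval hg)]
    split_ifs <;> simp
  | add p q hp hq => simp only [map_add, hp, hq]

lemma IsWeightedHomogeneous.of_aeval (hg : ∀ i, (g i).IsWeightedHomogeneous w' (w i))
    (hinj : Function.Injective (MvPolynomial.aeval (R := R) g)) {p : MvPolynomial σ R} {m : ℕ}
    (h : (MvPolynomial.aeval g p).IsWeightedHomogeneous w' m) : p.IsWeightedHomogeneous w m := by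
  have hp : weightedHomogeneousComponent w m p = p := hinj <| by
    rw [aeval_weightedHomogeneousComponent hg, weightedHomogeneousComponent_eq_self h]
  exact hp ▸ weightedHomogeneousComponent_isWeightedHomogeneous m p

end WeightedHomogeneous

section Esymm

variable (n : ℕ) (R : Type*) [CommRing R]

lemma isHomogeneous_esymm (σ : Type*) [Fintype σ] (k : ℕ) :
    (esymm σ R k).IsHomogeneous k :=
  IsHomogeneous.sum _ _ _ fun t ht => by
    simpa [(mem_powersetCard.mp ht).2] using
      IsHomogeneous.prod t (fun i => (X i : MvPolynomial σ R)) (fun _ => 1)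
        fun i _ => isHomogeneous_X R i

lemma isSymmetric_aeval_esymm (σ : Type*) [Fintype σ] (p : MvPolynomial (Fin n) R) :
    (aeval (fun i : Fin n => esymm σ R (i + 1)) p).IsSymmetric := by
  simpa [esymmAlgHom_apply] using (esymmAlgHom σ R n p).2

lemma aeval_esymm_injective :
    Function.Injective (aeval (R := R) fun i : Fin n => esymm (Fin n) R (i + 1)) := by
  intro p q h
  refine esymmAlgHom_fin_injective R le_rfl (Subtype.ext ?_)
  rwa [esymmAlgHom_apply, esymmAlgHom_apply]

lemma existsUnique_aeval_esymm_eq {q : MvPolynomial (Fin n) R} (hq : q.IsSymmetric) :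
    ∃! p, aeval (R := R) (fun i : Fin n => esymm (Fin n) R (i + 1)) p = q := by
  obtain ⟨p, hp⟩ := (esymmAlgHom_fin_bijective R n).2 ⟨q, hq⟩
  refine ⟨p, ?_, fun p' hp' => aeval_esymm_injective n R ?_⟩
  · simp only [← esymmAlgHom_apply, hp]
  · rw [hp', ← esymmAlgHom_apply, hp]

end Esymm

section FinSuccEquivLast

variable (R : Type*) [CommRing R] (n : ℕ)

noncomputable def finSuccEquivLast :
    MvPolynomial (Fin (n + 1)) R ≃ₐ[R] Polynomial (MvPolynomial (Fin n) R) :=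
  (renameEquiv R _root_.finSuccEquivLast).trans (optionEquivLeft R (Fin n))

variable {R n}

@[simp]
lemma finSuccEquivLast_X_last : finSuccEquivLast R n (X (Fin.last n)) = Polynomial.X := by
  simp [finSuccEquivLast]

@[simp]
lemma finSuccEquivLast_rename_castSucc (q : MvPolynomial (Fin n) R) :
    finSuccEquivLast R n (rename Fin.castSucc q) = Polynomial.C q := by
  have hsome : _root_.finSuccEquivLast ∘ Fin.castSucc = (some : Fin n → Option (Fin n)) :=
    _root_.funext finSuccEquivLast_castSucc
  rw [finSuccEquivLast, AlgEquiv.trans_apply, renameEquiv_apply, rename_rename, hsome,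
    ← AlgEquiv.eq_symm_apply, optionEquivLeft_symm_apply, Polynomial.aevalTower_C]

lemma ker_aeval_eq_span_X_last_sq_sub {B : Type*} [CommRing B] [IsDomain B] [NeZero (2 : B)]
    [Algebra R B] {g : Fin (n + 1) → B}
    (hinj : Function.Injective (aeval (R := R) (g ∘ Fin.castSucc)))
    (hδ : g (Fin.last n) ≠ 0) {τ : B →+* B}
    (hτf : ∀ a : MvPolynomial (Fin n) R,
      τ (aeval (g ∘ Fin.castSucc) a) = aeval (g ∘ Fin.castSucc) a)
    (hτδ : τ (g (Fin.last n)) = -g (Fin.last n)) {p : MvPolynomial (Fin n) R}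
    (hp : aeval (g ∘ Fin.castSucc) p = g (Fin.last n) ^ 2) :
    RingHom.ker (aeval (R := R) g)
      = Ideal.span {X (Fin.last n) ^ 2 - rename Fin.castSucc p} := by
  set φ := finSuccEquivLast R n
  set θ := Polynomial.eval₂RingHom (aeval (R := R) (g ∘ Fin.castSucc)).toRingHom
    (g (Fin.last n))
  have hcomp : (aeval (R := R) g : MvPolynomial (Fin (n + 1)) R →+* B)
      = θ.comp φ.toRingHom := by
    refine MvPolynomial.ringHom_ext (fun r => ?_) (Fin.lastCases ?_ fun i => ?_)
    · simp [φ, θ, finSuccEquivLast]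
    · simp [φ, θ]
    · rw [RingHom.comp_apply, ← rename_X (R := R) Fin.castSucc i]
      simp [φ, θ, aeval_rename, -rename_X]
  have hker : RingHom.ker θ = Ideal.span {Polynomial.X ^ 2 - Polynomial.C p} :=
    Polynomial.ker_eval₂RingHom_eq_span_X_sq_sub_C hinj hδ hτf hτδ hp
  have hG : φ (X (Fin.last n) ^ 2 - rename Fin.castSucc p)
      = Polynomial.X ^ 2 - Polynomial.C p := by
    simp [φ]
  ext Q
  rw [RingHom.mem_ker, ← RingHom.coe_coe, hcomp, RingHom.comp_apply, ← RingHom.mem_ker, hker,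
    ← hG, Ideal.mem_span_singleton, Ideal.mem_span_singleton]
  exact map_dvd_iff φ

end FinSuccEquivLast

end MvPolynomial

/-- **The syzygy ideal of `K[y₁,…,y_n]^{A_n}` is generated by one relation.**
Over a field `K` of characteristic `0`, `Δ² = (∏_{i<j}(y_i-y_j))²` is a symmetric
polynomial, hence `Δ² = P(e₁,…,e_n)` for a unique polynomial `P`, and the syzygy ideal
`J ⊆ K[x₁,…,x_{n+1}]` of the generators `(e₁,…,e_n,Δ)` of the alternating invariant
ring (the kernel of `x_i ↦ e_i`, `x_{n+1} ↦ Δ`) is generated by the single element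
`x_{n+1}² - P(x₁,…,x_n)`, which is homogeneous of degree `n(n-1)` for the grading
`deg x_i = i` (`i ≤ n`), `deg x_{n+1} = n(n-1)/2`. -/
theorem alternating_syzygy_ideal_principal
    {K : Type} [Field K] [CharZero K] (n : ℕ) (hn : 2 ≤ n)
    (e : Fin n → MvPolynomial (Fin n) K)
    (he : ∀ i : Fin n, e i = MvPolynomial.esymm (Fin n) K ((i : ℕ) + 1))
    (Δ : MvPolynomial (Fin n) K)
    (hΔ : Δ = ∏ p ∈ Finset.univ.filter (fun p : Fin n × Fin n => p.1 < p.2),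
      (MvPolynomial.X p.1 - MvPolynomial.X p.2))
    (g : Fin (n + 1) → MvPolynomial (Fin n) K)
    (hg : ∀ i : Fin n, g i.castSucc = e i) (hg' : g (Fin.last n) = Δ)
    (J : Ideal (MvPolynomial (Fin (n + 1)) K))
    (hJ : J = RingHom.ker (MvPolynomial.aeval (R := K) g))
    (w : Fin (n + 1) → ℕ)
    (hw : ∀ i : Fin n, w i.castSucc = (i : ℕ) + 1) (hw' : w (Fin.last n) = n * (n - 1) / 2) :
    (∀ π : Equiv.Perm (Fin n), MvPolynomial.rename π (Δ ^ 2) = Δ ^ 2)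
    ∧ (∃! P : MvPolynomial (Fin n) K, MvPolynomial.aeval e P = Δ ^ 2)
    ∧ ∀ P : MvPolynomial (Fin n) K, MvPolynomial.aeval e P = Δ ^ 2 →
        J = Ideal.span {MvPolynomial.X (Fin.last n) ^ 2
              - MvPolynomial.rename Fin.castSucc P}
        ∧ MvPolynomial.IsWeightedHomogeneous w
            (MvPolynomial.X (Fin.last n) ^ 2 - MvPolynomial.rename Fin.castSucc P)
            (n * (n - 1)) := by
  have hge : g ∘ Fin.castSucc = e := funext hg
  obtain rfl : e = fun i : Fin n => esymm (Fin n) K (i + 1) := funext he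
  obtain rfl : Δ = vandermondePoly n K := hΔ
  have hsym := isSymmetric_vandermondePoly_sq (n := n) (R := K)
  refine ⟨hsym, existsUnique_aeval_esymm_eq n K hsym, fun P hP => ⟨?_, ?_⟩⟩
  · have h01 : (⟨0, by omega⟩ : Fin n) ≠ ⟨1, by omega⟩ := by simp [Fin.ext_iff]
    rw [hJ]
    exact ker_aeval_eq_span_X_last_sq_sub (τ := (rename (Equiv.swap _ _)).toRingHom)
      (hge ▸ aeval_esymm_injective n K) (hg' ▸ vandermondePoly_ne_zero)
      (fun a => by rw [hge]; exact isSymmetric_aeval_esymm n K (Fin n) a _)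
      (by simpa [hg'] using rename_swap_vandermondePoly h01) (by rw [hge, hP, hg'])
  · have hN := Fin.card_filter_fst_lt_snd_mul_two n
    have hPw : P.IsWeightedHomogeneous (fun i : Fin n => (i : ℕ) + 1) (n * (n - 1)) :=
      .of_aeval (w' := 1) (fun _ => isHomogeneous_esymm K (Fin n) _)
        (aeval_esymm_injective n K) (hP ▸ hN ▸ isHomogeneous_vandermondePoly.pow 2)
    refine .sub ?_ ?_
    · have h2w : 2 • w (Fin.last n) = n * (n - 1) := by rw [hw', smul_eq_mul]; omega
      exact h2w ▸ (isWeightedHomogeneous_X K w (Fin.last n)).pow 2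
    · rw [rename_eq_aeval]
      exact hPw.aeval fun i => by simpa [hw] using isWeightedHomogeneous_X K w i.castSucc
end
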